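/- Let M, N be modules over a commutative ring with a perfect duality-like pairing ⟨·,·⟩ : M × N → R satisfying ⟨α,β⟩ = ε⟨β,α⟩' for a sign ε = (-1)^{r+1}, and suppose w : M → N and w : N → M satisfy w² = (-N₀)^r and ⟨wα, wβ⟩ = N₀^r ⟨α,β⟩ for a fixed integer N₀ ≥ 1 and r ≥ 0. Define the involution s̃ = (-N₀)^{-r}·(swap)∘(w⊗w) on M ⊗ N. Then s̃ is an involution, the trace-zero part of M ⊗ N (identified with End via the pairing) is the +1 eigenspace, and the scalar line is the -1 eigenspace. -/

import Mathlib

/-!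
Under `φ`, the swap of `V ⊗ V` becomes `f ↦ f - tr f • 1`, i.e. minus the `B`-adjoint, which in
dimension two is the adjugate. On pure tensors this is the identity
`B x y • z + B y z • x + B z x • y = 0` (an alternating trilinear map on a plane vanishes),
which becomes a polynomial identity in the coordinates `(B e ·, B f ·)` of a pair with `B e f = 1`.
Since `tr 1 = 2`, this map is an involution fixing `sl(V)` and negating the scalars.
-/

open Module TensorProduct

namespace LinearMap.IsAlt

variable {E V : Type*} [Field E] [AddCommGroup V] [Module E V] {B : V →ₗ[E] V →ₗ[E] E}

theorem apply_swap_eq_neg_one (hB : B.IsAlt) {e f : V} (hef : B e f = 1) : B f e = -1 := by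
  rw [← hB.neg, hef]

theorem linearIndependent_pair (hB : B.IsAlt) {e f : V} (hef : B e f = 1) :
    LinearIndependent E ![e, f] := by
  rw [LinearIndependent.pair_iff]
  intro a c h
  have he := congrArg (B e) h
  have hf := congrArg (B f) h
  simp only [map_add, map_smul, map_zero, hB.self_eq_zero, hef, hB.apply_swap_eq_neg_one hef,
    smul_eq_mul] at he hf
  exact ⟨by linear_combination -hf, by linear_combination he⟩

theorem smul_sub_smul_eq_self (hdim : finrank E V = 2) (hB : B.IsAlt) {e f : V}
    (hef : B e f = 1) (v : V) : B e v • f - B f v • e = v := by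
  let b := basisOfLinearIndependentOfCardEqFinrank (hB.linearIndependent_pair hef)
    (by rw [Fintype.card_fin, hdim])
  have hb : ⇑b = ![e, f] := coe_basisOfLinearIndependentOfCardEqFinrank ..
  have hid : (B e).smulRight f - (B f).smulRight e = LinearMap.id := by
    refine b.ext fun i ↦ ?_
    fin_cases i <;> simp [hb, hB.self_eq_zero, hef, hB.apply_swap_eq_neg_one hef]
  exact LinearMap.congr_fun hid v

theorem apply_eq_mul_sub_mul (hdim : finrank E V = 2) (hB : B.IsAlt) {e f : V}
    (hef : B e f = 1) (x y : V) : B x y = B e x * B f y - B f x * B e y := by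
  conv_lhs => rw [← hB.smul_sub_smul_eq_self hdim hef x, ← hB.smul_sub_smul_eq_self hdim hef y]
  simp only [map_sub, map_smul, LinearMap.sub_apply, LinearMap.smul_apply, hB.self_eq_zero, hef,
    hB.apply_swap_eq_neg_one hef, smul_eq_mul]
  ring

theorem cyclic_sum_smul_eq_zero (hdim : finrank E V = 2) (hB : B.IsAlt) (x y z : V) :
    B x y • z + B y z • x + B z x • y = 0 := by
  by_cases hzero : ∀ u w, B u w = 0
  · simp [hzero]
  push Not at hzero
  obtain ⟨e, f₀, hef₀⟩ := hzero
  set f := (B e f₀)⁻¹ • f₀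
  have hef : B e f = 1 := by simp [f, inv_mul_cancel₀ hef₀]
  have hdet := hB.apply_eq_mul_sub_mul hdim hef
  rw [← hB.smul_sub_smul_eq_self hdim hef (B x y • z + B y z • x + B z x • y)]
  simp only [map_add, map_smul, smul_eq_mul, hdet x y, hdet y z, hdet z x]
  module

theorem apply_comm_eq_sub_trace_smul_one [FiniteDimensional E V] (hdim : finrank E V = 2)
    (hB : B.IsAlt) (φ : V ⊗[E] V →ₗ[E] Module.End E V) (hφ : ∀ v w u, φ (v ⊗ₜ w) u = B w u • v)
    (t : V ⊗[E] V) : φ (TensorProduct.comm E V V t) = φ t - trace E V (φ t) • 1 := by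
  induction t using TensorProduct.induction_on with
  | zero => simp
  | add t t' ht ht' => simp only [map_add, ht, ht', add_smul]; abel
  | tmul v w =>
    have hrank_one : φ (v ⊗ₜ w) = (B w).smulRight v := LinearMap.ext (hφ v w)
    ext u
    have hcyc := hB.cyclic_sum_smul_eq_zero hdim w v u
    rw [← hB.neg w u] at hcyc
    simp only [comm_tmul, hφ, LinearMap.sub_apply, hrank_one, trace_smulRight,
      LinearMap.smul_apply, Module.End.one_apply, LinearMap.smulRight_apply]
    linear_combination (norm := module) hcyc

end LinearMap.IsAlt

open TensorProduct in
theorem stmt4_general (E V : Type*) [Field E] [AddCommGroup V] [Module E V]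
    [FiniteDimensional E V] (hdim : Module.finrank E V = 2)
    (B : V →ₗ[E] V →ₗ[E] E)
    (halt : ∀ v, B v v = 0)
    (φ : (V ⊗[E] V) ≃ₗ[E] Module.End E V)
    (hφ : ∀ v w u, φ (v ⊗ₜ[E] w) u = B w u • v)
    (s : Module.End E V →ₗ[E] Module.End E V)
    (hs : ∀ f : Module.End E V, s f = φ ((TensorProduct.comm E V V) (φ.symm f))) :
    (s ∘ₗ s = LinearMap.id) ∧
    (∀ f : Module.End E V, LinearMap.trace E V f = 0 → s f = f) ∧
    (∀ x : E, s (x • (1 : Module.End E V)) = -(x • (1 : Module.End E V))) := by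
  have hs_eq : ∀ g, s g = g - LinearMap.trace E V g • 1 := fun g ↦ by
    rw [hs]
    simpa using LinearMap.IsAlt.apply_comm_eq_sub_trace_smul_one hdim halt φ.toLinearMap hφ
      (φ.symm g)
  have htrace_one : LinearMap.trace E V 1 = 2 := by rw [LinearMap.trace_one, hdim, Nat.cast_ofNat]
  refine ⟨?_, fun g hg ↦ by rw [hs_eq, hg, zero_smul, sub_zero], fun x ↦ ?_⟩
  · ext1 g
    simp only [LinearMap.comp_apply, hs_eq, map_sub, map_smul, htrace_one, LinearMap.id_apply,
      smul_eq_mul]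
    module
  · rw [hs_eq, map_smul, htrace_one, smul_eq_mul]
    module

open TensorProduct in
/-- Let `V` be 2-dimensional with a nondegenerate alternating pairing `B`, and identify
`V ⊗ V ≅ End(V)` via `v ⊗ w ↦ (u ↦ B w u • v)`.  Then the induced operator
`s̃ = φ ∘ swap ∘ φ⁻¹` on `End(V)` is an involution whose `+1`-eigenspace contains the
trace-zero endomorphisms and which negates the scalar endomorphisms. -/
theorem stmt4 (E V : Type*) [Field E] [AddCommGroup V] [Module E V]
    [FiniteDimensional E V] (hdim : Module.finrank E V = 2)
    (B : V →ₗ[E] V →ₗ[E] E)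
    (halt : ∀ v, B v v = 0)
    (hnd : ∀ v, (∀ w, B v w = 0) → v = 0)
    (φ : (V ⊗[E] V) ≃ₗ[E] Module.End E V)
    (hφ : ∀ v w u, φ (v ⊗ₜ[E] w) u = B w u • v)
    (s : Module.End E V →ₗ[E] Module.End E V)
    (hs : ∀ f : Module.End E V, s f = φ ((TensorProduct.comm E V V) (φ.symm f))) :
    (s ∘ₗ s = LinearMap.id) ∧
    (∀ f : Module.End E V, LinearMap.trace E V f = 0 → s f = f) ∧
    (∀ x : E, s (x • (1 : Module.End E V)) = -(x • (1 : Module.End E V))) :=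
  stmt4_general E V hdim B halt φ hφ s hs
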